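/- For a finitely generated group G, there is a bijective correspondence between the finite index subgroups of G and the open subgroups of its profinite completion Ĝ, given by sending a finite-index subgroup H to its closure in Ĝ. -/

import Mathlib

open Function

/-- Index set: finite-index normal subgroups. -/
def FIN (G : Type) [Group G] : Type := {N : Subgroup G // N.Normal ∧ N.FiniteIndex}

instance FIN.group {G : Type} [Group G] (N : FIN G) : Group (G ⧸ N.1) :=
  @QuotientGroup.Quotient.group G _ N.1 N.2.1

instance {G : Type} [Group G] (N : FIN G) : TopologicalSpace (G ⧸ N.1) := ⊥
instance {G : Type} [Group G] (N : FIN G) : DiscreteTopology (G ⧸ N.1) := ⟨rfl⟩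
instance {G : Type} [Group G] (N : FIN G) : IsTopologicalGroup (G ⧸ N.1) where
  continuous_mul := continuous_of_discreteTopology
  continuous_inv := continuous_of_discreteTopology

/-- Transition homomorphisms of the inverse system of finite quotients. -/
def transMap {G : Type} [Group G] (N M : FIN G) (h : N.1 ≤ M.1) : G ⧸ N.1 →* G ⧸ M.1 :=
  @QuotientGroup.map G G _ _ N.1 N.2.1 M.1 M.2.1 (MonoidHom.id G) (fun _ hx => h hx)

/-- The compatible families, as a subgroup of the product of all finite quotients. -/
def profiniteSG (G : Type) [Group G] : Subgroup (∀ N : FIN G, G ⧸ N.1) where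
  carrier := {x | ∀ (N M : FIN G) (h : N.1 ≤ M.1), transMap N M h (x N) = x M}
  one_mem' := by intro N M h; simp
  mul_mem' := by intro a b ha hb N M h; rw [Pi.mul_apply, Pi.mul_apply, map_mul, ha N M h, hb N M h]
  inv_mem' := by intro a ha N M h; rw [Pi.inv_apply, Pi.inv_apply, map_inv, ha N M h]

/-- The profinite completion of a group `G`: the inverse limit of its finite quotients. -/
abbrev ProfiniteCompletion (G : Type) [Group G] : Type := ↥(profiniteSG G)

/-- The canonical homomorphism from `G` to its profinite completion. -/
def toPC (G : Type) [Group G] : G →* ProfiniteCompletion G where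
  toFun g := ⟨fun N => QuotientGroup.mk g, by
    intro N M h
    have h1 := N.2.1; have h2 := M.2.1
    simp [transMap, QuotientGroup.map_mk]; rfl⟩
  map_one' := by apply Subtype.ext; funext N; rfl
  map_mul' := by intro a b; apply Subtype.ext; funext N; rfl

/-- A group is residually finite if nontrivial elements survive in some finite quotient. -/
def ResiduallyFinite (G : Type) [Group G] : Prop :=
  ∀ g : G, g ≠ 1 → ∃ N : Subgroup G, N.Normal ∧ N.FiniteIndex ∧ g ∉ N

/-- Two groups have the same finite quotients. -/
def SameFiniteQuotients (G H : Type) [Group G] [Group H] : Prop :=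
  ∀ (Q : Type) [Group Q] [Finite Q],
    (∃ f : G →* Q, Function.Surjective f) ↔ (∃ f : H →* Q, Function.Surjective f)

section Aux

variable {G : Type} [Group G]

lemma compat (x : ProfiniteCompletion G) (N M : FIN G) (h : N.1 ≤ M.1) :
    transMap N M h (x.1 N) = x.1 M := x.2 N M h

lemma toPC_coord (g : G) (N : FIN G) : ((toPC G) g).1 N = QuotientGroup.mk g := rfl

lemma transMap_mk (N M : FIN G) (h : N.1 ≤ M.1) (g : G) :
    transMap N M h (QuotientGroup.mk g) = QuotientGroup.mk g := rfl

lemma finsetInf_spec (I : Finset (FIN G)) :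
    (I.inf (fun i => i.1)).Normal ∧ (I.inf (fun i => i.1)).FiniteIndex := by
  classical
  induction I using Finset.induction_on with
  | empty =>
      rw [Finset.inf_empty]
      exact ⟨inferInstance, inferInstance⟩
  | insert a s ha ih =>
      rw [Finset.inf_insert]
      haveI := a.2.1; haveI := a.2.2; haveI := ih.1; haveI := ih.2
      exact ⟨Subgroup.normal_inf_normal _ _, inferInstance⟩

def FINinf (I : Finset (FIN G)) : FIN G := ⟨I.inf (fun i => i.1), finsetInf_spec I⟩

lemma FINinf_le {I : Finset (FIN G)} {i : FIN G} (hi : i ∈ I) : (FINinf I).1 ≤ i.1 :=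
  Finset.inf_le hi

def FINmin (N M : FIN G) : FIN G :=
  ⟨N.1 ⊓ M.1, by
    haveI := N.2.1; haveI := M.2.1; haveI := N.2.2; haveI := M.2.2
    exact ⟨Subgroup.normal_inf_normal _ _, inferInstance⟩⟩

lemma continuous_coord (N : FIN G) :
    Continuous (fun x : ProfiniteCompletion G => x.1 N) :=
  (continuous_apply N).comp continuous_subtype_val

/-- Every open set containing `x` contains the set of points agreeing with `x`
at some single coordinate. -/
lemma exists_coord_subset {U : Set (ProfiniteCompletion G)} (hU : IsOpen U)
    {x : ProfiniteCompletion G} (hx : x ∈ U) :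
    ∃ N : FIN G, ∀ y : ProfiniteCompletion G, y.1 N = x.1 N → y ∈ U := by
  obtain ⟨V, hV, rfl⟩ := isOpen_induced_iff.mp hU
  rw [isOpen_pi_iff] at hV
  obtain ⟨I, u, hu, hsub⟩ := hV x.1 hx
  refine ⟨FINinf I, fun y hy => ?_⟩
  apply hsub
  intro i hi
  have h1 : y.1 i = x.1 i := by
    rw [← compat y (FINinf I) i (FINinf_le hi), hy, compat x (FINinf I) i (FINinf_le hi)]
  rw [h1]
  exact (hu i hi).2

lemma isOpen_coordPreimage (N : FIN G) (S : Set (G ⧸ N.1)) :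
    IsOpen ((fun x : ProfiniteCompletion G => x.1 N) ⁻¹' S) :=
  (isOpen_discrete S).preimage (continuous_coord N)

lemma closure_map_eq (H : Subgroup G) (N : FIN G) (hNH : N.1 ≤ H) :
    closure ((H.map (toPC G)) : Set (ProfiniteCompletion G)) =
      (fun x : ProfiniteCompletion G => x.1 N) ⁻¹'
        ((QuotientGroup.mk : G → G ⧸ N.1) '' (H : Set G)) := by
  apply subset_antisymm
  · apply closure_minimal
    · rintro _ ⟨h, hh, rfl⟩
      exact ⟨h, hh, rfl⟩
    · exact (isClosed_discrete _).preimage (continuous_coord N)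
  · intro x hx
    obtain ⟨h₀, hh₀, hmk⟩ := hx
    rw [mem_closure_iff]
    intro U hU hxU
    obtain ⟨M, hM⟩ := exists_coord_subset hU hxU
    set M' := FINmin M N with hM'
    have hM'M : M'.1 ≤ M.1 := inf_le_left
    have hM'N : M'.1 ≤ N.1 := inf_le_right
    obtain ⟨g, hg⟩ := QuotientGroup.mk_surjective (x.1 M')
    have hgN : (QuotientGroup.mk g : G ⧸ N.1) = x.1 N := by
      rw [← transMap_mk M' N hM'N g, hg, compat]
    have hgH : g ∈ H := by
      have : g⁻¹ * h₀ ∈ N.1 := QuotientGroup.eq.mp (hgN.trans hmk.symm)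
      have h2 : g⁻¹ * h₀ ∈ H := hNH this
      have : g = h₀ * (g⁻¹ * h₀)⁻¹ := by group
      rw [this]
      exact H.mul_mem hh₀ (H.inv_mem h2)
    refine ⟨toPC G g, ?_, ⟨g, hgH, rfl⟩⟩
    apply hM
    rw [toPC_coord, ← transMap_mk M' M hM'M g, hg, compat]

lemma preimage_closure_map (H : Subgroup G) (hH : H.FiniteIndex) :
    (toPC G) ⁻¹' (closure ((H.map (toPC G)) : Set (ProfiniteCompletion G))) = H := by
  haveI := hH
  have hN : H.normalCore.Normal ∧ H.normalCore.FiniteIndex := ⟨inferInstance, inferInstance⟩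
  set N : FIN G := ⟨H.normalCore, hN⟩ with hNdef
  rw [closure_map_eq H N H.normalCore_le]
  ext g
  simp only [Set.mem_preimage, toPC_coord]
  constructor
  · rintro ⟨h₀, hh₀, hmk⟩
    have : h₀⁻¹ * g ∈ N.1 := QuotientGroup.eq.mp hmk
    have h2 : h₀⁻¹ * g ∈ H := H.normalCore_le this
    have h3 : g = h₀ * (h₀⁻¹ * g) := by group
    rw [h3]
    exact H.mul_mem hh₀ h2
  · intro hg
    exact ⟨g, hg, rfl⟩

end Aux

/-- finite-index subgroups of `G` correspond bijectively to open subgroups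
of the profinite completion, via `H ↦ closure (image of H)`. -/
theorem stmt1 (G : Type) [Group G] (hfg : Group.FG G) :
    (∀ H : Subgroup G, H.FiniteIndex →
        IsOpen ((H.map (toPC G)).topologicalClosure : Set (ProfiniteCompletion G))) ∧
    Function.Injective
      (fun H : {H : Subgroup G // H.FiniteIndex} =>
        (H.1.map (toPC G)).topologicalClosure) ∧
    (∀ K : Subgroup (ProfiniteCompletion G), IsOpen (K : Set (ProfiniteCompletion G)) →
        ∃ H : Subgroup G, H.FiniteIndex ∧ (H.map (toPC G)).topologicalClosure = K) := by
  have hcoe : ∀ S : Subgroup (ProfiniteCompletion G),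
      (S.topologicalClosure : Set (ProfiniteCompletion G)) = closure (S : Set _) := fun _ => rfl
  refine ⟨?_, ?_, ?_⟩
  · intro H hH
    haveI := hH
    have key := closure_map_eq H ⟨H.normalCore, inferInstance, inferInstance⟩ H.normalCore_le
    rw [hcoe, key]
    exact isOpen_coordPreimage _ _
  · intro H₁ H₂ heq
    simp only at heq
    apply Subtype.ext
    have h1 := preimage_closure_map H₁.1 H₁.2
    have h2 := preimage_closure_map H₂.1 H₂.2
    have hset : closure ((H₁.1.map (toPC G)) : Set (ProfiniteCompletion G)) =
        closure ((H₂.1.map (toPC G)) : Set (ProfiniteCompletion G)) := by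
      rw [← hcoe, ← hcoe, heq]
    rw [hset, h2] at h1
    exact SetLike.coe_injective h1.symm
  · intro K hK
    obtain ⟨N, hN⟩ := exists_coord_subset hK K.one_mem
    haveI := N.2.1; haveI := N.2.2
    refine ⟨K.comap (toPC G), ?_, ?_⟩
    · have hNH : N.1 ≤ K.comap (toPC G) := by
        intro g hg
        apply hN
        rw [toPC_coord]
        exact (QuotientGroup.eq_one_iff g).mpr hg
      exact Subgroup.finiteIndex_of_le hNH
    · apply SetLike.coe_injective
      rw [hcoe]
      apply subset_antisymm
      · apply closure_minimal
        · rintro _ ⟨g, hg, rfl⟩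
          exact hg
        · exact K.isClosed_of_isOpen hK
      · intro k hk
        rw [mem_closure_iff]
        intro U hU hkU
        obtain ⟨M, hM⟩ := exists_coord_subset hU hkU
        set M' := FINmin M N with hM'def
        obtain ⟨g, hg⟩ := QuotientGroup.mk_surjective (k.1 M')
        have hcoordN : (toPC G g).1 N = k.1 N := by
          rw [toPC_coord, ← transMap_mk M' N inf_le_right g, hg]; exact compat _ _ _ _
        have hz : ((toPC G g * k⁻¹ : ProfiniteCompletion G)).1 N = 1 := by
          show (toPC G g).1 N * (k.1 N)⁻¹ = 1
          rw [hcoordN, mul_inv_cancel]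
        have hzK : (toPC G g * k⁻¹ : ProfiniteCompletion G) ∈ K := hN _ hz
        have hgK : toPC G g ∈ K := by
          have : toPC G g = (toPC G g * k⁻¹) * k := by group
          rw [this]
          exact K.mul_mem hzK hk
        refine ⟨toPC G g, ?_, ⟨g, hgK, rfl⟩⟩
        apply hM
        rw [toPC_coord, ← transMap_mk M' M inf_le_left g, hg]; exact compat _ _ _ _
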